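/- arXiv:2408.04155 — 4 statements merged into one kernel-verified Lean document; each statement's English description precedes it below -/
import Mathlib

section
/- Let T be a self-adjoint, injective, positive, bounded linear operator on a Hilbert space H. Then for every f ∈ H, ⟨f, T f⟩ = sup over g ∈ range(T^{1/2}) of [⟨g, f⟩ + ⟨f, g⟩ − ‖T^{-1/2} g‖²], where T^{-1/2} g is the unique element h with T^{1/2} h = g. -/
open ContinuousLinearMap

/-! Completing the square: for symmetric `S`,
`⟪S h, f⟫ + ⟪f, S h⟫ - ‖h‖² = ‖S f‖² - ‖h - S f‖²`, so the supremum is `‖S f‖² = ⟪f, S (S f)⟫`,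
attained at `h = S f`. -/

section

variable {H : Type*} [NormedAddCommGroup H] [InnerProductSpace ℝ H]

theorem LinearMap.IsSymmetric.inner_map_map_self {S : H →ₗ[ℝ] H} (hS : S.IsSymmetric) (f : H) :
    inner ℝ f (S (S f)) = ‖S f‖ ^ 2 := by
  rw [← hS, real_inner_self_eq_norm_sq]

theorem LinearMap.IsSymmetric.inner_add_inner_sub_norm_sq {S : H →ₗ[ℝ] H} (hS : S.IsSymmetric)
    (f h : H) :
    inner ℝ (S h) f + inner ℝ f (S h) - ‖h‖ ^ 2 = ‖S f‖ ^ 2 - ‖h - S f‖ ^ 2 := by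
  rw [hS, real_inner_comm (S h) f, hS, norm_sub_sq_real]
  ring

theorem LinearMap.IsSymmetric.isGreatest_inner_add_inner_sub_norm_sq {S : H →ₗ[ℝ] H}
    (hS : S.IsSymmetric) (f : H) :
    IsGreatest {r : ℝ | ∃ h : H, r = inner ℝ (S h) f + inner ℝ f (S h) - ‖h‖ ^ 2} (‖S f‖ ^ 2) := by
  refine ⟨⟨S f, by rw [hS.inner_add_inner_sub_norm_sq, sub_self, norm_zero]; ring⟩, ?_⟩
  rintro r ⟨h, rfl⟩
  rw [hS.inner_add_inner_sub_norm_sq]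
  exact sub_le_self _ (sq_nonneg _)

end

theorem stmt6_general {H : Type*} [NormedAddCommGroup H] [InnerProductSpace ℝ H]
    (T S : H →L[ℝ] H)
    (hS : S.IsPositive) (hSsq : S ∘L S = T) :
    ∀ f : H,
      IsLUB {r : ℝ | ∃ h : H,
          r = (inner ℝ (S h) f : ℝ) + (inner ℝ f (S h) : ℝ) - ‖h‖ ^ 2}
        ((inner ℝ f (T f) : ℝ)) := by
  intro f
  have hSym : (S : H →ₗ[ℝ] H).IsSymmetric := hS.isSymmetric
  rw [← hSsq, comp_apply]
  exact (hSym.inner_map_map_self f ▸ hSym.isGreatest_inner_add_inner_sub_norm_sq f).isLUB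

/-- Variational formula: for a bounded, self-adjoint, injective, positive operator `T`
with positive square root `S`, `⟨f, T f⟩` is the supremum over `g ∈ range S`
(written `g = S h`, with `h = T^{-1/2} g` the unique preimage) of
`⟨g, f⟩ + ⟨f, g⟩ − ‖T^{-1/2} g‖²`. -/
theorem stmt6 {H : Type*} [NormedAddCommGroup H] [InnerProductSpace ℝ H] [CompleteSpace H]
    (T S : H →L[ℝ] H) (hT : T.IsPositive) (hTinj : Function.Injective T)
    (hS : S.IsPositive) (hSsq : S ∘L S = T) :
    ∀ f : H,
      IsLUB {r : ℝ | ∃ h : H,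
          r = (inner ℝ (S h) f : ℝ) + (inner ℝ f (S h) : ℝ) - ‖h‖ ^ 2}
        ((inner ℝ f (T f) : ℝ)) :=
  stmt6_general T S hS hSsq
end

section
/- Let T and N be injective, self-adjoint, positive, bounded linear operators on a Hilbert space H. If range(T^{1/2}) ⊆ range(N^{1/2}) and for every g ∈ range(T^{1/2}) we have ‖N^{-1/2} g‖ ≤ ‖T^{-1/2} g‖, then ⟨f, T f⟩ ≤ ⟨f, N f⟩ for every f ∈ H. -/
/-!
Writing `T = ST²` and `N = SN²`, the claim is `‖ST f‖ ≤ ‖SN f‖`. The hypotheses say that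
every `ST h` equals `SN y` for some `y` with `‖y‖ ≤ ‖h‖`. Taking `h = ST f` and using symmetry,
`‖ST f‖² = ⟪ST (ST f), f⟫ = ⟪SN y, f⟫ = ⟪y, SN f⟫ ≤ ‖ST f‖ ‖SN f‖`.
-/

namespace LinearMap.IsSymmetric

variable {𝕜 E : Type*} [RCLike 𝕜] [NormedAddCommGroup E] [InnerProductSpace 𝕜 E]

theorem inner_apply_apply_self {S : E →ₗ[𝕜] E} (hS : S.IsSymmetric) (x : E) :
    inner 𝕜 x (S (S x)) = (‖S x‖ : 𝕜) ^ 2 := by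
  rw [← hS, inner_self_eq_norm_sq_to_K]

theorem norm_apply_le_of_forall_exists_contraction {A B : E →ₗ[𝕜] E}
    (hA : A.IsSymmetric) (hB : B.IsSymmetric)
    (hAB : ∀ h, ∃ y, B y = A h ∧ ‖y‖ ≤ ‖h‖) (x : E) : ‖A x‖ ≤ ‖B x‖ := by
  obtain ⟨y, hy, hy_le⟩ := hAB (A x)
  have hsq : ‖A x‖ ^ 2 ≤ ‖A x‖ * ‖B x‖ :=
    calc ‖A x‖ ^ 2 = RCLike.re (inner 𝕜 (A x) (A x)) := by
          rw [inner_self_eq_norm_sq_to_K, ← RCLike.ofReal_pow, RCLike.ofReal_re]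
      _ = RCLike.re (inner 𝕜 y (B x)) := by rw [← hA, ← hy, hB]
      _ ≤ ‖y‖ * ‖B x‖ := re_inner_le_norm y (B x)
      _ ≤ ‖A x‖ * ‖B x‖ := by gcongr
  rcases (norm_nonneg (A x)).eq_or_lt with h0 | h0
  · exact h0 ▸ norm_nonneg _
  · exact le_of_mul_le_mul_left (by rwa [sq] at hsq) h0

end LinearMap.IsSymmetric

theorem stmt7_general {H : Type*} [NormedAddCommGroup H] [InnerProductSpace ℝ H]
    (T N ST SN : H →L[ℝ] H)
    (hST : ST.IsPositive) (hSTsq : ST ∘L ST = T)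
    (hSN : SN.IsPositive) (hSNsq : SN ∘L SN = N)
    (hrange : Set.range ST ⊆ Set.range SN)
    (hnorm : ∀ h h' : H, SN h' = ST h → ‖h'‖ ≤ ‖h‖) :
    ∀ f : H, (inner ℝ f (T f) : ℝ) ≤ (inner ℝ f (N f) : ℝ) := by
  have hcontraction : ∀ h, ∃ y, SN y = ST h ∧ ‖y‖ ≤ ‖h‖ := fun h ↦
    let ⟨y, hy⟩ := hrange (Set.mem_range_self h)
    ⟨y, hy, hnorm h y hy⟩
  intro f
  subst hSTsq hSNsq
  calc inner ℝ f (ST (ST f)) = ‖ST f‖ ^ 2 := hST.isSymmetric.inner_apply_apply_self f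
    _ ≤ ‖SN f‖ ^ 2 := by
      gcongr
      exact hST.isSymmetric.norm_apply_le_of_forall_exists_contraction hSN.isSymmetric
        hcontraction f
    _ = inner ℝ f (SN (SN f)) := (hSN.isSymmetric.inner_apply_apply_self f).symm

/-- Lemma 6.5 (Mira–Geyer): if `T`, `N` are injective self-adjoint positive bounded
operators with positive square roots `ST`, `SN`, `range ST ⊆ range SN`, and the unique
preimages satisfy `‖N^{-1/2} g‖ ≤ ‖T^{-1/2} g‖` for all `g ∈ range ST`, then
`⟨f, T f⟩ ≤ ⟨f, N f⟩` for every `f`. -/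
theorem stmt7 {H : Type*} [NormedAddCommGroup H] [InnerProductSpace ℝ H] [CompleteSpace H]
    (T N ST SN : H →L[ℝ] H)
    (hT : T.IsPositive) (hTinj : Function.Injective T)
    (hN : N.IsPositive) (hNinj : Function.Injective N)
    (hST : ST.IsPositive) (hSTsq : ST ∘L ST = T)
    (hSN : SN.IsPositive) (hSNsq : SN ∘L SN = N)
    (hrange : Set.range ST ⊆ Set.range SN)
    (hnorm : ∀ h h' : H, SN h' = ST h → ‖h'‖ ≤ ‖h‖) :
    ∀ f : H, (inner ℝ f (T f) : ℝ) ≤ (inner ℝ f (N f) : ℝ) :=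
  stmt7_general T N ST SN hST hSTsq hSN hSNsq hrange hnorm
end

section
/- Let P be a Markov kernel reversible with respect to π, and suppose −1 is an eigenvalue of the induced operator P̂ on L²₀(π). Then P is periodic: there exist disjoint measurable sets S₁, S₂ with π(S₁), π(S₂) > 0 such that P(x, S₂) = 1 for π-a.e. x ∈ S₁ and P(x, S₁) = 1 for π-a.e. x ∈ S₂. -/
/-!
Take a measurable version `g` of the eigenfunction. Reversibility makes `π` invariant, so
`|g x| = |∫ g dP(x, ·)| ≤ ∫ |g| dP(x, ·)` is an a.e. inequality between two functions with the
same `π`-integral, hence an equality. Equality in the triangle inequality forces `P(x, ·)` to live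
where `g` has the sign opposite to that of `g x`, and on `{g = 0}` when `g x = 0`. Thus `{g = 0}`
is closed under `P`, and by reversibility it cannot be entered from `{g ≠ 0}`: `P` swaps
`{g > 0}` and `{g < 0}`. Invariance then gives both sets the same measure, positive as `g ≠ 0`.
-/

open MeasureTheory ProbabilityTheory Filter
open SignType (sign)

theorem neg_abs_le_sign_mul (a b : ℝ) : -|b| ≤ sign a * b := by
  rcases lt_trichotomy a 0 with ha | rfl | ha
  · simpa [sign_neg ha] using le_abs_self b
  · simp
  · simpa [sign_pos ha] using neg_abs_le b

theorem sign_eq_neg_of_sign_mul_eq_neg_abs {a b : ℝ} (h : sign a * b = -|b|)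
    (hab : a ≠ 0 → b ≠ 0) : sign b = -sign a := by
  rcases lt_trichotomy a 0 with ha | rfl | ha
  · have hb : 0 < b := by
      simp only [sign_neg ha, SignType.coe_neg, SignType.coe_one, neg_one_mul, neg_inj] at h
      exact lt_of_le_of_ne (h ▸ abs_nonneg b) (hab ha.ne).symm
    simp [sign_neg ha, sign_pos hb]
  · simp_all
  · have hb : b < 0 := by
      simp only [sign_pos ha, SignType.coe_one, one_mul] at h
      exact lt_of_le_of_ne (by linarith [abs_nonneg b]) (hab ha.ne')
    simp [sign_pos ha, sign_neg hb]

theorem ae_sign_mul_eq_neg_abs {X : Type*} [MeasurableSpace X] {ν : Measure X} {g : X → ℝ}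
    (hg : Integrable g ν) {c : ℝ} (h : ∫ y, g y ∂ν = -c) (habs : ∫ y, |g y| ∂ν = |c|) :
    ∀ᵐ y ∂ν, sign c * g y = -|g y| := by
  have hle : (fun y => -|g y|) ≤ᵐ[ν] fun y => sign c * g y :=
    ae_of_all _ fun y => neg_abs_le_sign_mul c (g y)
  have heq : ∫ y, -|g y| ∂ν = ∫ y, sign c * g y ∂ν := by
    rw [integral_neg, habs, integral_const_mul, h, mul_neg, sign_mul_self]
  filter_upwards [(integral_eq_iff_of_ae_le hg.abs.neg (hg.const_mul _) hle).1 heq] with y hy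
  exact hy.symm

namespace ProbabilityTheory.Kernel

variable {X : Type*} [MeasurableSpace X] {κ : Kernel X X} {μ : Measure X}

theorem isReversible_of_setIntegral_toReal [IsFiniteMeasure μ] [IsFiniteKernel κ]
    (h : ∀ A B : Set X, MeasurableSet A → MeasurableSet B →
      ∫ x in A, (κ x B).toReal ∂μ = ∫ x in B, (κ x A).toReal ∂μ) :
    κ.IsReversible μ := by
  have hfin : ∀ A B, ∫⁻ x in A, κ x B ∂μ ≠ ⊤ := fun A B =>
    ((lintegral_mono fun x => κ.measure_le_bound x B).trans_lt <| by
      rw [MeasureTheory.setLIntegral_const]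
      exact ENNReal.mul_lt_top κ.bound_lt_top (measure_lt_top μ A)).ne
  intro A B hA hB
  have := h A B hA hB
  rw [integral_toReal (κ.measurable_coe hB).aemeasurable (ae_of_all _ fun x => measure_lt_top _ _),
    integral_toReal (κ.measurable_coe hA).aemeasurable (ae_of_all _ fun x => measure_lt_top _ _)]
    at this
  exact (ENNReal.toReal_eq_toReal_iff' (hfin A B) (hfin B A)).mp this

theorem Invariant.ae_ae_of_ae (hκ : κ.Invariant μ) {p : X → Prop} (h : ∀ᵐ y ∂μ, p y) :
    ∀ᵐ x ∂μ, ∀ᵐ y ∂κ x, p y :=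
  Measure.ae_ae_of_ae_comp (by rwa [hκ.def])

theorem Invariant.ae_integrable (hκ : κ.Invariant μ) {E : Type*} [NormedAddCommGroup E]
    {g : X → E} (hg : Integrable g μ) :
    ∀ᵐ x ∂μ, Integrable g (κ x) :=
  Measure.ae_integrable_of_integrable_comp (by rwa [hκ.def])

theorem Invariant.integral_integral [SFinite μ] [IsSFiniteKernel κ] (hκ : κ.Invariant μ)
    {E : Type*} [NormedAddCommGroup E] [NormedSpace ℝ E] {g : X → E} (hg : Integrable g μ) :
    ∫ x, ∫ y, g y ∂κ x ∂μ = ∫ x, g x ∂μ := by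
  have hg' : Integrable g ((κ ∘ₖ const Unit μ) ()) := by
    rwa [← Measure.comp_eq_comp_const_apply, hκ.def]
  simpa only [← Measure.comp_eq_comp_const_apply, hκ.def, const_apply]
    using (Kernel.integral_comp hg').symm

theorem Invariant.ae_integral_norm_eq_of_ae_le [SFinite μ] [IsSFiniteKernel κ]
    (hκ : κ.Invariant μ) {E : Type*} [NormedAddCommGroup E] {g : X → E} (hg : Integrable g μ)
    (h : ∀ᵐ x ∂μ, ‖g x‖ ≤ ∫ y, ‖g y‖ ∂κ x) :
    ∀ᵐ x ∂μ, ∫ y, ‖g y‖ ∂κ x = ‖g x‖ := by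
  have hint : Integrable (fun x => ∫ y, ‖g y‖ ∂κ x) μ :=
    Measure.integrable_integral_norm_of_integrable_comp (by rwa [hκ.def])
  have := (integral_eq_iff_of_ae_le hg.norm hint h).1 (hκ.integral_integral hg.norm).symm
  filter_upwards [this] with x hx using hx.symm

theorem Invariant.measure_le_of_ae_eq_one (hκ : κ.Invariant μ) {A B : Set X}
    (hA : MeasurableSet A) (hB : MeasurableSet B) (h : ∀ᵐ x ∂μ, x ∈ A → κ x B = 1) :
    μ A ≤ μ B :=
  calc μ A = ∫⁻ x in A, κ x B ∂μ := by
        rw [setLIntegral_congr_fun_ae hA h, setLIntegral_one]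
    _ ≤ ∫⁻ x, κ x B ∂μ := setLIntegral_le_lintegral A _
    _ = μ B := by rw [← Measure.bind_apply hB κ.aemeasurable, hκ.def]

theorem IsReversible.ae_measure_eq_zero_of_ae_measure_eq_zero (hκ : κ.IsReversible μ)
    {A B : Set X} (hA : MeasurableSet A) (hB : MeasurableSet B)
    (h : ∀ᵐ x ∂μ, x ∈ B → κ x A = 0) : ∀ᵐ x ∂μ, x ∈ A → κ x B = 0 := by
  have hzero : ∫⁻ x in A, κ x B ∂μ = 0 := by
    rw [hκ hA hB]
    exact (lintegral_eq_zero_iff (κ.measurable_coe hA)).2 ((ae_restrict_iff' hB).2 h)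
  rwa [lintegral_eq_zero_iff (κ.measurable_coe hB), EventuallyEq, ae_restrict_iff' hA] at hzero

theorem IsReversible.ae_ae_sign_eq_neg [SFinite μ] [IsMarkovKernel κ]
    (hκ : κ.IsReversible μ) {g : X → ℝ} (hgm : Measurable g) (hg : Integrable g μ)
    (heig : ∀ᵐ x ∂μ, ∫ y, g y ∂κ x = -g x) :
    ∀ᵐ x ∂μ, ∀ᵐ y ∂κ x, sign (g y) = -sign (g x) := by
  have hinv := hκ.invariant
  have habs : ∀ᵐ x ∂μ, ∫ y, |g y| ∂κ x = |g x| := by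
    refine hinv.ae_integral_norm_eq_of_ae_le hg ?_
    filter_upwards [heig] with x hx
    simpa [hx] using norm_integral_le_integral_norm (μ := κ x) g
  have hmul : ∀ᵐ x ∂μ, ∀ᵐ y ∂κ x, sign (g x) * g y = -|g y| := by
    filter_upwards [hinv.ae_integrable hg, heig, habs] with x hint hx hxabs
    exact ae_sign_mul_eq_neg_abs hint hx hxabs
  have hzero : ∀ᵐ x ∂μ, x ∈ {y | g y ≠ 0} → κ x {y | g y = 0} = 0 := by
    have hN : MeasurableSet {y | g y = 0} := measurableSet_eq_fun hgm measurable_const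
    refine hκ.ae_measure_eq_zero_of_ae_measure_eq_zero hN.compl hN ?_
    filter_upwards [hmul] with x hx (hx0 : g x = 0)
    rw [measure_eq_zero_iff_ae_notMem]
    filter_upwards [hx] with y hy
    simpa [hx0, eq_comm (a := (0 : ℝ))] using hy
  filter_upwards [hmul, hzero] with x hx hx0
  have hreach : ∀ᵐ y ∂κ x, g x ≠ 0 → g y ≠ 0 := by
    by_cases hgx : g x = 0
    · exact ae_of_all _ fun _ h => (h hgx).elim
    · filter_upwards [measure_eq_zero_iff_ae_notMem.1 (hx0 hgx)] with y hy _ using hy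
  filter_upwards [hx, hreach] with y hy hyx using sign_eq_neg_of_sign_mul_eq_neg_abs hy hyx

end ProbabilityTheory.Kernel

theorem stmt10_general {X : Type*} [MeasurableSpace X] (π : Measure X) [IsProbabilityMeasure π]
    (P : Kernel X X) [IsMarkovKernel P]
    (hrev : ∀ A B : Set X, MeasurableSet A → MeasurableSet B →
      ∫ x in A, (P x B).toReal ∂π = ∫ x in B, (P x A).toReal ∂π)
    (f : X → ℝ) (hf : MemLp f 2 π)
    (hfne : ¬ f =ᵐ[π] (fun _ => (0 : ℝ)))
    (heig : (fun x => ∫ y, f y ∂(P x)) =ᵐ[π] (fun x => -f x)) :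
    ∃ S₁ S₂ : Set X, MeasurableSet S₁ ∧ MeasurableSet S₂ ∧ Disjoint S₁ S₂ ∧
      0 < π S₁ ∧ 0 < π S₂ ∧
      (∀ᵐ x ∂π, x ∈ S₁ → P x S₂ = 1) ∧ (∀ᵐ x ∂π, x ∈ S₂ → P x S₁ = 1) := by
  obtain ⟨g, hgm, hfg⟩ := hf.aestronglyMeasurable
  have hP : P.IsReversible π := Kernel.isReversible_of_setIntegral_toReal hrev
  have hg : Integrable g π := (hf.integrable one_le_two).congr hfg
  have hgeig : ∀ᵐ x ∂π, ∫ y, g y ∂P x = -g x := by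
    filter_upwards [heig, hP.invariant.ae_ae_of_ae hfg, hfg] with x hx hfgx hfgx'
    rw [← integral_congr_ae hfgx, hx, hfgx']
  have hflip := hP.ae_ae_sign_eq_neg hgm.measurable hg hgeig
  have hS₁ : MeasurableSet {x | 0 < g x} := measurableSet_lt measurable_const hgm.measurable
  have hS₂ : MeasurableSet {x | g x < 0} := measurableSet_lt hgm.measurable measurable_const
  have h₁₂ : ∀ᵐ x ∂π, x ∈ {x | 0 < g x} → P x {x | g x < 0} = 1 := by
    filter_upwards [hflip] with x hx (hgx : 0 < g x)
    refine (mem_ae_iff_prob_eq_one hS₂).1 (hx.mono fun y hy => ?_)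
    exact sign_eq_neg_one_iff.1 (by rw [hy, sign_pos hgx])
  have h₂₁ : ∀ᵐ x ∂π, x ∈ {x | g x < 0} → P x {x | 0 < g x} = 1 := by
    filter_upwards [hflip] with x hx (hgx : g x < 0)
    refine (mem_ae_iff_prob_eq_one hS₁).1 (hx.mono fun y hy => ?_)
    exact sign_eq_one_iff.1 (by rw [hy, sign_neg hgx]; rfl)
  have hmeas : π {x | 0 < g x} = π {x | g x < 0} :=
    le_antisymm (hP.invariant.measure_le_of_ae_eq_one hS₁ hS₂ h₁₂)
      (hP.invariant.measure_le_of_ae_eq_one hS₂ hS₁ h₂₁)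
  have hpos : π {x | 0 < g x} ≠ 0 := fun h => hfne <| hfg.trans <| ae_iff.2 <|
    measure_mono_null (fun x hx => (lt_or_gt_of_ne hx).symm) (measure_union_null h (hmeas ▸ h))
  have hdisj : Disjoint {x | 0 < g x} {x | g x < 0} :=
    Set.disjoint_left.2 fun x (h₁ : 0 < g x) (h₂ : g x < 0) => lt_asymm h₁ h₂
  exact ⟨_, _, hS₁, hS₂, hdisj, pos_iff_ne_zero.2 hpos, pos_iff_ne_zero.2 (hmeas ▸ hpos), h₁₂, h₂₁⟩

/-- If `P` is a Markov kernel reversible with respect to `π` and `−1` is an eigenvalue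
of the induced operator on `L²₀(π)`, then `P` is periodic: there are disjoint sets
`S₁, S₂` of positive measure with `P(x, S₂) = 1` for a.e. `x ∈ S₁` and
`P(x, S₁) = 1` for a.e. `x ∈ S₂`. -/
theorem stmt10 {X : Type*} [MeasurableSpace X] (π : Measure X) [IsProbabilityMeasure π]
    (P : Kernel X X) [IsMarkovKernel P]
    (hrev : ∀ A B : Set X, MeasurableSet A → MeasurableSet B →
      ∫ x in A, (P x B).toReal ∂π = ∫ x in B, (P x A).toReal ∂π)
    (f : X → ℝ) (hf : MemLp f 2 π) (hf0 : ∫ x, f x ∂π = 0)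
    (hfne : ¬ f =ᵐ[π] (fun _ => (0 : ℝ)))
    (heig : (fun x => ∫ y, f y ∂(P x)) =ᵐ[π] (fun x => -f x)) :
    ∃ S₁ S₂ : Set X, MeasurableSet S₁ ∧ MeasurableSet S₂ ∧ Disjoint S₁ S₂ ∧
      0 < π S₁ ∧ 0 < π S₂ ∧
      (∀ᵐ x ∂π, x ∈ S₁ → P x S₂ = 1) ∧ (∀ᵐ x ∂π, x ∈ S₂ → P x S₁ = 1) :=
  stmt10_general π P hrev f hf hfne heig
end

section
/- Let P and Q be Markov kernels on (X, F), both reversible with respect to the probability measure π, such that P Peskun-dominates Q: for π-a.e. x ∈ X and every measurable A, P(x, A \ {x}) ≥ Q(x, A \ {x}). Then the operator Q̂ − P̂ is positive on L²₀(π): ⟨f, (Q̂ − P̂) f⟩ ≥ 0 for every f ∈ L²₀(π). Moreover, ⟨f, (Q̂ − P̂) f⟩ = (1/2)∬ (f(x) − f(y))² (δ_x(dy) + P(x, dy) − Q(x, dy)) π(dx). -/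
open MeasureTheory ProbabilityTheory

/-!
Reversibility tested on `A = univ` says that `π` is invariant, `P ∘ₘ π = π`, so both coordinates
of `π ⊗ₘ P` have law `π`. Expanding the square under `π ⊗ₘ P` then gives
`∬ (f x - f y)² P(x, dy) π(dx) = 2 ∫ f² dπ - 2 ⟨f, P̂ f⟩`; subtracting the same identity for `Q`
yields the formula, whose `δ_x` term vanishes. Peskun dominance compares the `P`- and
`Q`-integrals of `y ↦ (f x - f y)²` pointwise in `x`, because this function vanishes at `y = x`,
the one point where the kernels are not compared. Invariance also makes `π`-null sets `P x`-null
for `π`-a.e. `x`, which lets us replace `f` by a measurable version inside the inner integrals.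
-/

section
variable {X : Type*} [MeasurableSpace X] {π : Measure X}

theorem comp_eq_self_of_reversible [IsProbabilityMeasure π] (κ : Kernel X X) [IsMarkovKernel κ]
    (hrev : ∀ A B : Set X, MeasurableSet A → MeasurableSet B →
      ∫ x in A, (κ x B).toReal ∂π = ∫ x in B, (κ x A).toReal ∂π) :
    κ ∘ₘ π = π := by
  ext B hB
  have h := hrev Set.univ B MeasurableSet.univ hB
  simp only [Measure.restrict_univ, measure_univ, ENNReal.toReal_one, integral_const,
    smul_eq_mul, mul_one] at h
  rw [integral_toReal (κ.measurable_coe hB).aemeasurable (ae_of_all _ fun _ => measure_lt_top _ _),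
    ← Measure.bind_apply hB κ.aemeasurable] at h
  simpa using (ENNReal.toReal_eq_toReal_iff' (measure_ne_top _ _) (measure_ne_top _ _)).1 h

lemma ae_ae_eq_of_comp_eq {β : Type*} {κ : Kernel X X} (hκ : κ ∘ₘ π = π) {f g : X → β}
    (hfg : f =ᵐ[π] g) :
    ∀ᵐ x ∂π, f =ᵐ[κ x] g :=
  Measure.ae_ae_of_ae_comp (by rwa [hκ])

lemma measurePreserving_fst_compProd [SFinite π] (κ : Kernel X X) [IsMarkovKernel κ] :
    MeasurePreserving Prod.fst (π ⊗ₘ κ) π :=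
  ⟨measurable_fst, Measure.fst_compProd π κ⟩

lemma measurePreserving_snd_compProd [SFinite π] {κ : Kernel X X} [IsSFiniteKernel κ]
    (hκ : κ ∘ₘ π = π) : MeasurePreserving Prod.snd (π ⊗ₘ κ) π :=
  ⟨measurable_snd, (Measure.snd_compProd π κ).trans hκ⟩

lemma MeasureTheory.MeasurePreserving.integral_comp_of_aestronglyMeasurable {Y : Type*}
    [MeasurableSpace Y] {μ : Measure Y} {φ : Y → X} (hφ : MeasurePreserving φ μ π) {E : Type*}
    [NormedAddCommGroup E] [NormedSpace ℝ E] {g : X → E}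
    (hg : AEStronglyMeasurable g π) : ∫ y, g (φ y) ∂μ = ∫ x, g x ∂π := by
  rw [← hφ.map_eq] at hg ⊢
  exact (integral_map hφ.aemeasurable hg).symm

section Dirichlet
variable [SFinite π] {κ : Kernel X X} [IsMarkovKernel κ] {f : X → ℝ}

lemma memLp_fst_compProd (hf : MemLp f 2 π) : MemLp (fun p : X × X => f p.1) 2 (π ⊗ₘ κ) :=
  hf.comp_measurePreserving (measurePreserving_fst_compProd κ)

lemma memLp_snd_compProd (hκ : κ ∘ₘ π = π) (hf : MemLp f 2 π) :
    MemLp (fun p : X × X => f p.2) 2 (π ⊗ₘ κ) :=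
  hf.comp_measurePreserving (measurePreserving_snd_compProd hκ)

lemma integrable_mul_compProd (hκ : κ ∘ₘ π = π) (hf : MemLp f 2 π) :
    Integrable (fun p : X × X => f p.1 * f p.2) (π ⊗ₘ κ) :=
  (memLp_fst_compProd hf).integrable_mul (memLp_snd_compProd hκ hf)

lemma integrable_sq_sub_compProd (hκ : κ ∘ₘ π = π) (hf : MemLp f 2 π) :
    Integrable (fun p : X × X => (f p.1 - f p.2) ^ 2) (π ⊗ₘ κ) :=
  ((memLp_fst_compProd hf).sub (memLp_snd_compProd hκ hf)).integrable_sq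

lemma integrable_mul_integral (hκ : κ ∘ₘ π = π) (hf : MemLp f 2 π) :
    Integrable (fun x => f x * ∫ y, f y ∂κ x) π := by
  simpa only [integral_const_mul, Kernel.prodMkLeft_apply, Kernel.const_apply]
    using (integrable_mul_compProd hκ hf).integral_compProd

lemma integrable_integral_sq_sub (hκ : κ ∘ₘ π = π) (hf : MemLp f 2 π) :
    Integrable (fun x => ∫ y, (f x - f y) ^ 2 ∂κ x) π :=
  (integrable_sq_sub_compProd hκ hf).integral_compProd

lemma ae_integrable_sq_sub (hκ : κ ∘ₘ π = π) (hf : MemLp f 2 π) :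
    ∀ᵐ x ∂π, Integrable (fun y => (f x - f y) ^ 2) (κ x) :=
  (integrable_sq_sub_compProd hκ hf).ae_of_compProd

theorem integral_integral_sq_sub (hκ : κ ∘ₘ π = π) (hf : MemLp f 2 π) :
    ∫ x, ∫ y, (f x - f y) ^ 2 ∂κ x ∂π
      = 2 * ∫ x, f x ^ 2 ∂π - 2 * ∫ x, f x * ∫ y, f y ∂κ x ∂π := by
  have hfst : ∫ p : X × X, f p.1 ^ 2 ∂(π ⊗ₘ κ) = ∫ x, f x ^ 2 ∂π :=
    (measurePreserving_fst_compProd κ).integral_comp_of_aestronglyMeasurable (hf.1.pow 2)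
  have hsnd : ∫ p : X × X, f p.2 ^ 2 ∂(π ⊗ₘ κ) = ∫ x, f x ^ 2 ∂π :=
    (measurePreserving_snd_compProd hκ).integral_comp_of_aestronglyMeasurable (hf.1.pow 2)
  have hmul : ∫ x, f x * ∫ y, f y ∂κ x ∂π = ∫ p : X × X, f p.1 * f p.2 ∂(π ⊗ₘ κ) := by
    simp_rw [Measure.integral_compProd (integrable_mul_compProd hκ hf), integral_const_mul]
  have hexpand : (fun p : X × X => (f p.1 - f p.2) ^ 2)
      = fun p => f p.1 ^ 2 + f p.2 ^ 2 - 2 * (f p.1 * f p.2) := by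
    ext p; ring
  have hsq₁ := (memLp_fst_compProd (κ := κ) hf).integrable_sq
  have hsq₂ := (memLp_snd_compProd hκ hf).integrable_sq
  rw [← Measure.integral_compProd (integrable_sq_sub_compProd hκ hf), hexpand,
    integral_sub (f := fun p : X × X => f p.1 ^ 2 + f p.2 ^ 2) (hsq₁.add hsq₂)
      ((integrable_mul_compProd hκ hf).const_mul 2),
    integral_add hsq₁ hsq₂, integral_const_mul, hfst, hsnd, hmul]
  ring

end Dirichlet

lemma integral_le_integral_of_peskun {μ ν : Measure X} {x : X}
    (hμν : ∀ A : Set X, MeasurableSet A → μ (A \ {x}) ≤ ν (A \ {x}))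
    {g : X → ℝ} (hg : Measurable g) (hg0 : 0 ≤ g) (hgx : g x = 0) (hgi : Integrable g ν) :
    ∫ y, g y ∂μ ≤ ∫ y, g y ∂ν := by
  set S := {y | g y ≠ 0}
  have hS : MeasurableSet S := (measurableSet_singleton 0).compl.preimage hg
  have hxS : x ∉ S := fun h => h hgx
  have hle : μ.restrict S ≤ ν.restrict S := by
    refine Measure.le_iff.2 fun A hA => ?_
    rw [Measure.restrict_apply hA, Measure.restrict_apply hA,
      ← Set.sdiff_singleton_eq_self (show x ∉ A ∩ S from fun h => hxS h.2)]
    exact hμν _ (hA.inter hS)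
  have hsupp : ∀ y ∉ S, g y = 0 := fun y hy => not_not.1 hy
  rw [← setIntegral_eq_integral_of_forall_compl_eq_zero (μ := μ) hsupp,
    ← setIntegral_eq_integral_of_forall_compl_eq_zero (μ := ν) hsupp]
  exact integral_mono_measure hle (ae_of_all _ hg0) hgi.restrict

lemma integral_sq_sub_congr {μ : Measure X} {f g : X → ℝ} {x : X} (hx : f x = g x)
    (hfg : f =ᵐ[μ] g) : ∫ y, (f x - f y) ^ 2 ∂μ = ∫ y, (g x - g y) ^ 2 ∂μ :=
  integral_congr_ae (hfg.mono fun y hy => by simp only [hx, hy])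

lemma ae_integral_sq_sub_dirac {f : X → ℝ} (hf : AEStronglyMeasurable f π) :
    ∀ᵐ x ∂π, ∫ y, (f x - f y) ^ 2 ∂Measure.dirac x = 0 := by
  filter_upwards [hf.ae_eq_mk, ae_ae_eq_of_comp_eq Measure.id_comp hf.ae_eq_mk] with x hx hxx
  rw [Kernel.id_apply] at hxx
  have hmeas : Measurable (hf.mk f) := hf.stronglyMeasurable_mk.measurable
  rw [integral_sq_sub_congr hx hxx, integral_dirac' (fun y => (hf.mk f x - hf.mk f y) ^ 2) x
    ((measurable_const.sub hmeas).pow_const 2).stronglyMeasurable, sub_self, sq, mul_zero]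

lemma ae_integral_sq_sub_le_of_peskun [SFinite π] {P Q : Kernel X X} [IsMarkovKernel P]
    (hP : P ∘ₘ π = π) (hQ : Q ∘ₘ π = π)
    (hpesk : ∀ᵐ x ∂π, ∀ A : Set X, MeasurableSet A → Q x (A \ {x}) ≤ P x (A \ {x}))
    {f : X → ℝ} (hf : MemLp f 2 π) :
    ∀ᵐ x ∂π, ∫ y, (f x - f y) ^ 2 ∂Q x ≤ ∫ y, (f x - f y) ^ 2 ∂P x := by
  set g := hf.1.mk f
  have hg : Measurable g := hf.1.stronglyMeasurable_mk.measurable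
  filter_upwards [hpesk, hf.1.ae_eq_mk, ae_ae_eq_of_comp_eq hP hf.1.ae_eq_mk,
    ae_ae_eq_of_comp_eq hQ hf.1.ae_eq_mk, ae_integrable_sq_sub hP hf]
    with x hpeskx hx hPx hQx hint
  rw [integral_sq_sub_congr hx hPx, integral_sq_sub_congr hx hQx]
  refine integral_le_integral_of_peskun hpeskx ((measurable_const.sub hg).pow_const 2)
    (fun y => sq_nonneg _) (by simp) (hint.congr ?_)
  filter_upwards [hPx] with y hy
  rw [hx, hy]

theorem integral_mul_integral_sub_eq [SFinite π] {P Q : Kernel X X} [IsMarkovKernel P]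
    [IsMarkovKernel Q] (hP : P ∘ₘ π = π) (hQ : Q ∘ₘ π = π) {f : X → ℝ} (hf : MemLp f 2 π) :
    ∫ x, f x * ((∫ y, f y ∂(Q x)) - ∫ y, f y ∂(P x)) ∂π =
      (1 / 2) * ∫ x, ((∫ y, (f x - f y) ^ 2 ∂(Measure.dirac x))
        + (∫ y, (f x - f y) ^ 2 ∂(P x)) - ∫ y, (f x - f y) ^ 2 ∂(Q x)) ∂π := by
  calc ∫ x, f x * ((∫ y, f y ∂(Q x)) - ∫ y, f y ∂(P x)) ∂π
      = ∫ x, f x * ∫ y, f y ∂(Q x) ∂π - ∫ x, f x * ∫ y, f y ∂(P x) ∂π := by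
        simp_rw [mul_sub]
        exact integral_sub (integrable_mul_integral hQ hf) (integrable_mul_integral hP hf)
    _ = (1 / 2) * (∫ x, ∫ y, (f x - f y) ^ 2 ∂(P x) ∂π
          - ∫ x, ∫ y, (f x - f y) ^ 2 ∂(Q x) ∂π) := by
        rw [integral_integral_sq_sub hP hf, integral_integral_sq_sub hQ hf]
        ring
    _ = _ := by
        rw [← integral_sub (integrable_integral_sq_sub hP hf) (integrable_integral_sq_sub hQ hf)]
        congr 1
        refine integral_congr_ae ?_
        filter_upwards [ae_integral_sq_sub_dirac hf.1] with x hx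
        rw [hx, zero_add]

end

/-- If `P` and `Q` are Markov kernels reversible with respect to `π` and `P`
Peskun-dominates `Q`, then `Q̂ − P̂` is positive on `L²₀(π)`; moreover
`⟨f, (Q̂ − P̂) f⟩ = (1/2)∬ (f(x) − f(y))² (δ_x(dy) + P(x,dy) − Q(x,dy)) π(dx)`. -/
theorem stmt17 {X : Type*} [MeasurableSpace X] (π : Measure X) [IsProbabilityMeasure π]
    (P Q : Kernel X X) [IsMarkovKernel P] [IsMarkovKernel Q]
    (hrevP : ∀ A B : Set X, MeasurableSet A → MeasurableSet B →
      ∫ x in A, (P x B).toReal ∂π = ∫ x in B, (P x A).toReal ∂π)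
    (hrevQ : ∀ A B : Set X, MeasurableSet A → MeasurableSet B →
      ∫ x in A, (Q x B).toReal ∂π = ∫ x in B, (Q x A).toReal ∂π)
    (hpesk : ∀ᵐ x ∂π, ∀ A : Set X, MeasurableSet A → Q x (A \ {x}) ≤ P x (A \ {x})) :
    ∀ f : X → ℝ, MemLp f 2 π → ∫ x, f x ∂π = 0 →
      (0 ≤ ∫ x, f x * ((∫ y, f y ∂(Q x)) - ∫ y, f y ∂(P x)) ∂π) ∧
      (∫ x, f x * ((∫ y, f y ∂(Q x)) - ∫ y, f y ∂(P x)) ∂π =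
        (1 / 2) * ∫ x, ((∫ y, (f x - f y) ^ 2 ∂(Measure.dirac x))
          + (∫ y, (f x - f y) ^ 2 ∂(P x)) - ∫ y, (f x - f y) ^ 2 ∂(Q x)) ∂π) := by
  intro f hf _
  have hP := comp_eq_self_of_reversible P hrevP
  have hQ := comp_eq_self_of_reversible Q hrevQ
  have heq := integral_mul_integral_sub_eq hP hQ hf
  refine ⟨?_, heq⟩
  rw [heq]
  refine mul_nonneg (by norm_num) (integral_nonneg_of_ae ?_)
  filter_upwards [ae_integral_sq_sub_dirac hf.1, ae_integral_sq_sub_le_of_peskun hP hQ hpesk hf]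
    with x hdirac hle
  simpa [hdirac] using hle
end
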